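/- Let h, f, g : ℝ → ℝ be functions and let s, t be real numbers with 0 ≤ s ≤ t, h(s) ≠ 0 and h(t) ≠ 0. Let E₁^{[s,t]} be the evolution algebra whose structure matrix is (h(t)/2) times the matrix with constant rows (c₁,c₁,c₁), (c₂,c₂,c₂), (c₃,c₃,c₃), where c₁ = 1/h(s) + f(s), c₂ = 1/h(s) − g(s), c₃ = g(s) − f(s). If (1/h(s)+f(s))·(1/h(s)−g(s))·(g(s)−f(s)) ≠ 0, (g(s)−f(s))·(2/h(s)+f(s)−g(s)) > 0, and (2/h(s))·(1/h(s)+f(s))·(1/h(s)−g(s))·(2/h(s)+f(s)−g(s)) > 0, then E₁^{[s,t]} is isomorphic to the evolution algebra E₇ whose structure matrix has rows (1,0,0), (1,0,0), (1,0,0). -/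

import Mathlib

/-! In `E_A` with `A i j = aᵢ` every product is a multiple of `(1,1,1)`,
`x ∗ y = (Σ aᵢ xᵢ yᵢ) • (1,1,1)`, while in `E₇` one has `u ∗ w = ⟪u, w⟫ • e₀`. Put `L = Σ aᵢ`; when
every `L aᵢ` is positive, the diagonal scaling `xᵢ ↦ √(L aᵢ) xᵢ` turns `L Σ aᵢ xᵢ yᵢ` into the dot
product and sends `(1,1,1)` to a vector of length `|L|`, which a Householder reflection carries
to `L e₀` without changing dot products. For `aᵢ = (h t / 2) cᵢ` we have `c₁ + c₂ + c₃ = 2 / h s`,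
and the hypotheses force `(c₁ + c₂ + c₃) cᵢ > 0`. -/

/-- Evolution algebra multiplication on ℝ³ determined by a structure matrix `A`:
`(x ∗_A y) j = ∑ i, x i * y i * A i j`. -/
def evolMul (A : Matrix (Fin 3) (Fin 3) ℝ) (x y : Fin 3 → ℝ) : Fin 3 → ℝ :=
  fun j => ∑ i, x i * y i * A i j

/-- The evolution algebras with structure matrices `A` and `B` are isomorphic:
there is an ℝ-linear equivalence of ℝ³ intertwining the two multiplications. -/
def EvolIso (A B : Matrix (Fin 3) (Fin 3) ℝ) : Prop :=
  ∃ f : (Fin 3 → ℝ) ≃ₗ[ℝ] (Fin 3 → ℝ),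
    ∀ x y, f (evolMul A x y) = evolMul B (f x) (f y)

open Matrix

theorem dotProduct_ofLp_eq_inner {ι : Type*} [Fintype ι] (x y : EuclideanSpace ℝ ι) :
    x.ofLp ⬝ᵥ y.ofLp = inner ℝ x y := by
  simp [EuclideanSpace.inner_eq_star_dotProduct, dotProduct_comm]

theorem exists_linearEquiv_dotProduct_apply_eq {ι : Type*} [Fintype ι] {v w : ι → ℝ}
    (h : v ⬝ᵥ v = w ⬝ᵥ w) :
    ∃ g : (ι → ℝ) ≃ₗ[ℝ] (ι → ℝ), g v = w ∧ ∀ x y, g x ⬝ᵥ g y = x ⬝ᵥ y := by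
  set V := WithLp.toLp 2 v
  set W := WithLp.toLp 2 w
  have hVW : ‖V‖ = ‖W‖ := by
    rw [← sq_eq_sq₀ (norm_nonneg _) (norm_nonneg _), ← real_inner_self_eq_norm_sq,
      ← real_inner_self_eq_norm_sq, ← dotProduct_ofLp_eq_inner, ← dotProduct_ofLp_eq_inner]
    exact h
  let T := WithLp.linearEquiv 2 ℝ (ι → ℝ)
  let R := Submodule.reflection (ℝ ∙ (V - W))ᗮ
  refine ⟨T.symm ≪≫ₗ R.toLinearEquiv ≪≫ₗ T, congrArg WithLp.ofLp (Submodule.reflection_sub hVW),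
    fun x y => ?_⟩
  calc (R (WithLp.toLp 2 x)).ofLp ⬝ᵥ (R (WithLp.toLp 2 y)).ofLp
      = inner ℝ (R (WithLp.toLp 2 x)) (R (WithLp.toLp 2 y)) := dotProduct_ofLp_eq_inner _ _
    _ = x ⬝ᵥ y := by rw [R.inner_map_map, ← dotProduct_ofLp_eq_inner]

theorem evolMul_vecMulVec (a b x y : Fin 3 → ℝ) :
    evolMul (vecMulVec a b) x y = (∑ i, x i * y i * a i) • b := by
  ext j
  simp [evolMul, vecMulVec_apply, Finset.sum_mul, mul_assoc]

theorem evolIso_vecMulVec_of_dotProduct {a b : Fin 3 → ℝ} (L : ℝ)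
    (f : (Fin 3 → ℝ) ≃ₗ[ℝ] (Fin 3 → ℝ)) (hf_one : f 1 = L • b)
    (hf_dot : ∀ x y, f x ⬝ᵥ f y = L * ∑ i, x i * y i * a i) :
    EvolIso (vecMulVec a 1) (vecMulVec 1 b) := by
  refine ⟨f, fun x y => ?_⟩
  rw [evolMul_vecMulVec, evolMul_vecMulVec, map_smul, hf_one, smul_smul, mul_comm, ← hf_dot]
  simp [dotProduct]

theorem evolIso_vecMulVec_one_single {a : Fin 3 → ℝ} (ha : ∀ i, 0 < (∑ j, a j) * a i) :
    EvolIso (vecMulVec a 1) (vecMulVec 1 (Pi.single 0 1)) := by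
  set L := ∑ j, a j
  set σ : Fin 3 → ℝ := fun i => √(L * a i)
  have hσ_sq (i) : σ i ^ 2 = L * a i := Real.sq_sqrt (ha i).le
  have hσ_ne (i) : σ i ≠ 0 := (Real.sqrt_pos.2 (ha i)).ne'
  let D := LinearEquiv.piCongrRight fun i => LinearEquiv.smulOfNeZero ℝ ℝ (σ i) (hσ_ne i)
  have hD_dot (x y : Fin 3 → ℝ) : D x ⬝ᵥ D y = L * ∑ i, x i * y i * a i := by
    simp only [dotProduct, Finset.mul_sum]
    refine Finset.sum_congr rfl fun i _ => ?_
    simp only [LinearEquiv.piCongrRight_apply, LinearEquiv.smulOfNeZero_apply, smul_eq_mul, D]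
    linear_combination (x i * y i) * hσ_sq i
  have hD_one : D 1 = σ := by
    ext i
    simp [D]
  have hσ_dot : σ ⬝ᵥ σ = (L • Pi.single 0 1) ⬝ᵥ (L • Pi.single 0 1 : Fin 3 → ℝ) := by
    simpa [hD_one] using hD_dot 1 1
  obtain ⟨g, hg_σ, hg_dot⟩ := exists_linearEquiv_dotProduct_apply_eq hσ_dot
  refine evolIso_vecMulVec_of_dotProduct L (D ≪≫ₗ g) ?_ fun x y => ?_
  · simpa [hD_one] using hg_σ
  · simpa [hg_dot] using hD_dot x y

theorem sum_mul_pos_of_pos {c₁ c₂ c₃ : ℝ} (h₃ : 0 < c₃ * (c₁ + c₂))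
    (h₁₂ : 0 < (c₁ + c₂ + c₃) * c₁ * c₂ * (c₁ + c₂)) :
    0 < (c₁ + c₂ + c₃) * c₁ ∧ 0 < (c₁ + c₂ + c₃) * c₂ ∧ 0 < (c₁ + c₂ + c₃) * c₃ := by
  have hsum₁₂ : 0 < (c₁ + c₂ + c₃) * (c₁ + c₂) := by nlinarith [sq_nonneg (c₁ + c₂)]
  have hc₁₂ : 0 < c₁ * c₂ :=
    pos_of_mul_pos_left (b := (c₁ + c₂ + c₃) * (c₁ + c₂)) (by linarith) hsum₁₂.le
  refine ⟨?_, ?_, by nlinarith [sq_nonneg c₃]⟩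
  · exact pos_of_mul_pos_left (b := c₂ * (c₁ + c₂)) (by linarith) (by linarith [sq_nonneg c₂])
  · exact pos_of_mul_pos_left (b := c₁ * (c₁ + c₂)) (by linarith) (by linarith [sq_nonneg c₁])

theorem stmt_general (h f g : ℝ → ℝ) (s t : ℝ)
    (hht : h t ≠ 0)
    (c₁ c₂ c₃ : ℝ) (hc₁ : c₁ = 1 / h s + f s) (hc₂ : c₂ = 1 / h s - g s)
    (hc₃ : c₃ = g s - f s)
    (h2 : (g s - f s) * (2 / h s + f s - g s) > 0)
    (h3 : (2 / h s) * (1 / h s + f s) * (1 / h s - g s) * (2 / h s + f s - g s) > 0) :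
    EvolIso ((h t / 2) • (!![c₁, c₁, c₁; c₂, c₂, c₂; c₃, c₃, c₃] : Matrix (Fin 3) (Fin 3) ℝ)) (!![1, 0, 0; 1, 0, 0; 1, 0, 0] : Matrix (Fin 3) (Fin 3) ℝ) := by
  set k := h t / 2
  set c : Fin 3 → ℝ := ![c₁, c₂, c₃]
  have hA : k • !![c₁, c₁, c₁; c₂, c₂, c₂; c₃, c₃, c₃] = vecMulVec (k • c) 1 := by
    ext i j; fin_cases i <;> fin_cases j <;> simp [c]
  have hB : !![1, 0, 0; 1, 0, 0; 1, 0, 0] = vecMulVec (1 : Fin 3 → ℝ) (Pi.single 0 1) := by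
    ext i j; fin_cases i <;> fin_cases j <;> simp
  have h₃ : 0 < c₃ * (c₁ + c₂) := by rw [hc₁, hc₂, hc₃]; linear_combination h2
  have h₁₂ : 0 < (c₁ + c₂ + c₃) * c₁ * c₂ * (c₁ + c₂) := by
    rw [hc₁, hc₂, hc₃]; linear_combination h3
  have hc : ∀ i, 0 < (∑ j, c j) * c i := by
    obtain ⟨hpos₁, hpos₂, hpos₃⟩ := sum_mul_pos_of_pos h₃ h₁₂
    intro i
    fin_cases i <;> simpa [c, Fin.sum_univ_three]
  rw [hA, hB]
  refine evolIso_vecMulVec_one_single fun i => ?_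
  have hscale : (∑ j, (k • c) j) * (k • c) i = k ^ 2 * ((∑ j, c j) * c i) := by
    simp only [Pi.smul_apply, smul_eq_mul, ← Finset.mul_sum]
    ring
  rw [hscale]
  exact mul_pos (by positivity) (hc i)

theorem stmt (h f g : ℝ → ℝ) (s t : ℝ) (hst0 : 0 ≤ s) (hst : s ≤ t)
    (hhs : h s ≠ 0) (hht : h t ≠ 0)
    (c₁ c₂ c₃ : ℝ) (hc₁ : c₁ = 1 / h s + f s) (hc₂ : c₂ = 1 / h s - g s)
    (hc₃ : c₃ = g s - f s)
    (h1 : (1 / h s + f s) * (1 / h s - g s) * (g s - f s) ≠ 0)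
    (h2 : (g s - f s) * (2 / h s + f s - g s) > 0)
    (h3 : (2 / h s) * (1 / h s + f s) * (1 / h s - g s) * (2 / h s + f s - g s) > 0) :
    EvolIso ((h t / 2) • (!![c₁, c₁, c₁; c₂, c₂, c₂; c₃, c₃, c₃] : Matrix (Fin 3) (Fin 3) ℝ)) (!![1, 0, 0; 1, 0, 0; 1, 0, 0] : Matrix (Fin 3) (Fin 3) ℝ) :=
  stmt_general h f g s t hht c₁ c₂ c₃ hc₁ hc₂ hc₃ h2 h3
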